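/- arXiv:1404.4416 — 2 statements merged into one kernel-verified Lean document; each statement's English description precedes it below -/
import Mathlib

section
/- If the infinite binary sequence x = x_1x_2... is eventually periodic with minimal period k, then lim_{n→∞} Σ(x_1...x_n)/n³ = 1/(3k). -/
open Filter

/-- Number of occurrences of `ξ` as a factor of `w` (occurrence at position `i`
means `ξ = w_{i+1}...w_{i+|ξ|}`). -/
def occ (w ξ : List Bool) : ℕ :=
  ((List.range w.length).filter (fun i => ξ.isPrefixOf (w.drop i))).length

/-- `ℓ`-fold concatenation `η^ℓ` of the word `η`. -/
def wpow (η : List Bool) (ℓ : ℕ) : List Bool := (List.replicate ℓ η).flatten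

/-- The Kamae–Xue complexity `Σ(w) = Σ_{ξ ∈ {0,1}^+} |w|_ξ²`.  Since only
factors of `w` contribute nonzero terms, the sum is taken over the (finite) set
of nonempty sublists of `w`, which contains all factors of `w`. -/
def kxSum (w : List Bool) : ℕ :=
  ∑ ξ ∈ w.sublists.toFinset.filter (fun ξ => ξ ≠ []), (occ w ξ) ^ 2

/-- `Λ(w) = max{|η|²(ℓ+1)³ : η nonempty, ℓ ≥ 1, η^ℓ a factor of w}`. -/
noncomputable def Lam (w : List Bool) : ℕ :=
  sSup {m | ∃ η ℓ, η ≠ ([] : List Bool) ∧ 1 ≤ ℓ ∧ wpow η ℓ <:+: w ∧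
    m = η.length ^ 2 * (ℓ + 1) ^ 3}

/-- A nonempty word is prime (primitive) if it is not a proper power. -/
def IsPrimeWord (η : List Bool) : Prop :=
  η ≠ [] ∧ ∀ ζ ℓ, 2 ≤ ℓ → η ≠ wpow ζ ℓ

/-- `|v|_{ξ,m}`: occurrences of `ξ` in `v` ending in the last `m` positions. -/
def occEnd (v ξ : List Bool) (m : ℕ) : ℕ :=
  ((List.range v.length).filter
    (fun i => ξ.isPrefixOf (v.drop i) && decide (v.length < i + ξ.length + m))).length

/-- The prefix `x_1 x_2 ⋯ x_n` of the infinite sequence `x`. -/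
def pref (x : ℕ → Bool) (n : ℕ) : List Bool := (List.range n).map x

/-!
Counting pairs of occurrences gives `Σ(w) = ∑_{i,j} lcp(w_i, w_j)`, where `w_i` is the suffix
of `w` starting at position `i`: the nonempty common prefixes of `w_i` and `w_j` are exactly the
factors occurring at both positions. On a prefix of length `n` of `x`, and for `i, j` past the
preperiod, this lcp is the distance to the end of the word when `i ≡ j (mod k)` and at most `k`
otherwise, by minimality of `k`; the remaining terms contribute `O(n²)`. Finally
`∑_{i ≡ j} min(n - i, n - j) = ∑_{u < n} #{i, j ≤ u | i ≡ j}`, each inner count is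
`(u + 1)² / k + O(u)`, so the total is `n³ / (3k) + O(n²)`.
-/

open Finset

theorem abs_natCast_sub_le {a b e : ℕ} (h₁ : a ≤ b + e) (h₂ : b ≤ a + e) :
    |(a : ℝ) - b| ≤ e :=
  abs_sub_le_iff.mpr ⟨sub_le_iff_le_add'.mpr (by exact_mod_cast h₁),
    sub_le_iff_le_add'.mpr (by exact_mod_cast h₂)⟩

theorem tendsto_div_pow_of_abs_sub_le {f : ℕ → ℝ} {c C : ℝ} {d : ℕ}
    (h : ∀ n, |f n - c * n ^ (d + 1)| ≤ C * n ^ d) :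
    Tendsto (fun n => f n / n ^ (d + 1)) atTop (nhds c) := by
  refine tendsto_iff_norm_sub_tendsto_zero.mpr <| squeeze_zero'
    (Eventually.of_forall fun _ => norm_nonneg _) ?_ (tendsto_const_div_atTop_nhds_zero_nat C)
  filter_upwards [eventually_gt_atTop 0] with n hn
  have hn' : (0 : ℝ) < n := by exact_mod_cast hn
  rw [Real.norm_eq_abs, show f n / n ^ (d + 1) - c = (f n - c * n ^ (d + 1)) / n ^ (d + 1) by
      field_simp,
    abs_div, abs_of_pos (pow_pos hn' _), div_le_div_iff₀ (pow_pos hn' _) hn']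
  calc |f n - c * n ^ (d + 1)| * n ≤ C * n ^ d * n := by gcongr; exact h n
    _ = C * n ^ (d + 1) := by ring

namespace List

variable {α : Type*} [DecidableEq α]

def commonPrefixLength : List α → List α → ℕ
  | a :: u, b :: v => if a = b then commonPrefixLength u v + 1 else 0
  | _, _ => 0

theorem commonPrefixLength_le_length_left :
    ∀ u v : List α, commonPrefixLength u v ≤ u.length
  | [], _ | _ :: _, [] => by simp [commonPrefixLength]
  | a :: u, b :: v => by
    have := commonPrefixLength_le_length_left u v
    unfold commonPrefixLength
    split_ifs <;> simp [*]

theorem commonPrefixLength_le_length_right :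
    ∀ u v : List α, commonPrefixLength u v ≤ v.length
  | [], _ | _ :: _, [] => by simp [commonPrefixLength]
  | a :: u, b :: v => by
    have := commonPrefixLength_le_length_right u v
    unfold commonPrefixLength
    split_ifs <;> simp [*]

theorem prefix_and_prefix_iff_prefix_take :
    ∀ {ξ u v : List α}, ξ <+: u ∧ ξ <+: v ↔ ξ <+: u.take (commonPrefixLength u v)
  | [], _, _ => by simp
  | _ :: _, [], _ | _ :: _, _ :: _, [] => by simp [commonPrefixLength]
  | c :: ξ, a :: u, b :: v => by
    by_cases hab : a = b
    · subst hab
      have ih := prefix_and_prefix_iff_prefix_take (ξ := ξ) (u := u) (v := v)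
      simp only [cons_prefix_cons, commonPrefixLength, ↓reduceIte, take_succ_cons]
      grind
    · simp only [cons_prefix_cons, commonPrefixLength, hab, ↓reduceIte, take_zero, prefix_nil]
      grind

theorem commonPrefixLength_eq_min :
    ∀ {u v : List α}, (∀ t < min u.length v.length, u[t]? = v[t]?) →
      commonPrefixLength u v = min u.length v.length
  | [], _, _ | _ :: _, [], _ => by simp [commonPrefixLength]
  | a :: u, b :: v, h => by
    have hab : a = b := by simpa using h 0 (by simp)
    have ih := commonPrefixLength_eq_min (u := u) (v := v) fun t ht =>
      by simpa using h (t + 1) (by simpa [Nat.succ_min_succ] using ht)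
    simp [commonPrefixLength, hab, ih, Nat.succ_min_succ]

theorem commonPrefixLength_le_of_getElem?_ne :
    ∀ {u v : List α} {t : ℕ}, u[t]? ≠ v[t]? → commonPrefixLength u v ≤ t
  | [], _, _, _ | _ :: _, [], _, _ => by simp [commonPrefixLength]
  | a :: u, b :: v, t, h => by
    by_cases hab : a = b
    · cases t with
      | zero => simp [hab] at h
      | succ t =>
        have := commonPrefixLength_le_of_getElem?_ne (u := u) (v := v) (t := t) (by simpa using h)
        simpa [commonPrefixLength, hab] using this
    · simp [commonPrefixLength, hab]

theorem card_filter_ne_nil_prefix (S : Finset (List α)) (z : List α)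
    (hS : ∀ ξ, ξ <+: z → ξ ∈ S) : #{ξ ∈ S | ξ ≠ [] ∧ ξ <+: z} = z.length := by
  rw [show z.length = #(Icc 1 z.length) by simp]
  refine Finset.card_nbij' length (z.take ·) ?_ ?_ ?_ ?_
  · intro ξ hξ
    simp only [coe_filter, Set.mem_ofPred_eq] at hξ
    simp only [coe_Icc, Set.mem_Icc]
    exact ⟨length_pos_iff.mpr hξ.2.1, hξ.2.2.length_le⟩
  · intro m hm
    simp only [coe_Icc, Set.mem_Icc] at hm
    simp only [coe_filter, Set.mem_ofPred_eq]
    refine ⟨hS _ (take_prefix _ _), ?_, take_prefix _ _⟩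
    rw [← length_pos_iff, length_take]
    omega
  · intro ξ hξ
    simp only [coe_filter, Set.mem_ofPred_eq] at hξ
    exact (prefix_iff_eq_take.mp hξ.2.2).symm
  · intro m hm
    simp only [coe_Icc, Set.mem_Icc] at hm
    simp [hm.2]

end List

theorem occ_eq_card (w ξ : List Bool) : occ w ξ = #{i ∈ range w.length | ξ <+: w.drop i} := by
  simp only [occ, ← List.isPrefixOf_iff_prefix, card_def, filter_val, range_val, Multiset.range,
    Multiset.filter_coe, Multiset.coe_card, Bool.decide_eq_true]

theorem kxSum_eq_sum_commonPrefixLength (w : List Bool) :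
    kxSum w = ∑ i ∈ range w.length, ∑ j ∈ range w.length,
      (w.drop i).commonPrefixLength (w.drop j) := by
  have hsq (ξ : List Bool) : occ w ξ ^ 2 = ∑ i ∈ range w.length, ∑ j ∈ range w.length,
      if ξ <+: w.drop i ∧ ξ <+: w.drop j then 1 else 0 := by
    simp only [occ_eq_card, card_filter, sq, sum_mul_sum, ite_zero_mul_ite_zero, one_mul]
  have hcount (i j : ℕ) :
      #{ξ ∈ w.sublists.toFinset | ξ ≠ [] ∧ ξ <+: w.drop i ∧ ξ <+: w.drop j}
        = (w.drop i).commonPrefixLength (w.drop j) := by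
    simp_rw [List.prefix_and_prefix_iff_prefix_take]
    refine (List.card_filter_ne_nil_prefix _ _ fun ξ hξ => ?_).trans (List.length_take_of_le ?_)
    · exact List.mem_toFinset.mpr <| List.mem_sublists.mpr <|
        ((hξ.trans (List.take_prefix _ _)).isInfix.trans (List.drop_suffix _ _).isInfix).sublist
    · exact List.commonPrefixLength_le_length_left _ _
  simp only [kxSum, hsq]
  rw [sum_comm]
  refine sum_congr rfl fun i _ => ?_
  rw [sum_comm]
  refine sum_congr rfl fun j _ => ?_
  rw [sum_boole, filter_filter, hcount, Nat.cast_id]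

section EventuallyPeriodic

variable {α : Type*} {x : ℕ → α} {k N : ℕ}

theorem apply_eq_of_modEq_of_eventually_periodic (hN : ∀ n, N ≤ n → x (n + k) = x n)
    {i j : ℕ} (hi : N ≤ i) (hj : N ≤ j) (hij : i ≡ j [MOD k]) : x i = x j := by
  wlog hle : i ≤ j generalizing i j
  · exact (this hj hi hij.symm (le_of_not_ge hle)).symm
  obtain ⟨c, rfl⟩ : ∃ c, j = i + k * c := by
    obtain ⟨c, hc⟩ := (Nat.modEq_iff_dvd' hle).mp hij
    exact ⟨c, by omega⟩
  clear hj hij hle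
  induction c with
  | zero => rfl
  | succ c ih => rw [Nat.mul_succ, ← Nat.add_assoc, hN _ (by omega), ih]

theorem exists_lt_apply_add_ne_of_minimal_period (hk : 0 < k)
    (hN : ∀ n, N ≤ n → x (n + k) = x n)
    (hmin : ∀ p, 1 ≤ p → (∃ M, ∀ n, M ≤ n → x (n + p) = x n) → k ≤ p) {i j : ℕ}
    (hi : N ≤ i) (hj : N ≤ j) (hij : ¬ i ≡ j [MOD k]) : ∃ t < k, x (i + t) ≠ x (j + t) := by
  wlog hle : i ≤ j generalizing i j
  · obtain ⟨t, ht, hne⟩ := this hj hi (fun h => hij h.symm) (le_of_not_ge hle)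
    exact ⟨t, ht, hne.symm⟩
  by_contra! hagree
  have hshift (t : ℕ) : x (i + t) = x (j + t) := by
    have hmod : ∀ m, m + t ≡ m + t % k [MOD k] := fun m => (Nat.mod_modEq t k).symm.add_left m
    rw [apply_eq_of_modEq_of_eventually_periodic hN (by omega) (by omega) (hmod i),
      apply_eq_of_modEq_of_eventually_periodic hN (by omega) (by omega) (hmod j),
      hagree _ (Nat.mod_lt t hk)]
  have hr : 1 ≤ (j - i) % k := Nat.pos_of_ne_zero fun h =>
    hij ((Nat.modEq_iff_dvd' hle).mpr (Nat.dvd_of_mod_eq_zero h))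
  have hper (n : ℕ) (hn : j ≤ n) : x (n + (j - i) % k) = x n :=
    calc x (n + (j - i) % k) = x (n + (j - i)) :=
          apply_eq_of_modEq_of_eventually_periodic hN (by omega) (by omega)
            ((Nat.mod_modEq _ k).add_left n)
      _ = x (j + (n - i)) := by congr 1; omega
      _ = x (i + (n - i)) := (hshift _).symm
      _ = x n := by congr 1; omega
  exact absurd (hmin _ hr ⟨j, hper⟩) (not_le.mpr (Nat.mod_lt _ hk))

end EventuallyPeriodic

section Prefix

variable {x : ℕ → Bool} {k N n : ℕ}

theorem length_drop_pref (i : ℕ) : ((pref x n).drop i).length = n - i := by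
  simp [pref]

theorem getElem?_drop_pref (i t : ℕ) :
    ((pref x n).drop i)[t]? = if i + t < n then some (x (i + t)) else none := by
  split_ifs with h
  · simp [pref, h]
  · simpa [pref] using h

theorem commonPrefixLength_drop_pref_of_modEq (hN : ∀ n, N ≤ n → x (n + k) = x n) {i j : ℕ}
    (hi : N ≤ i) (hj : N ≤ j) (hij : i ≡ j [MOD k]) :
    ((pref x n).drop i).commonPrefixLength ((pref x n).drop j) = min (n - i) (n - j) := by
  rw [← length_drop_pref (x := x) i, ← length_drop_pref (x := x) j]
  refine List.commonPrefixLength_eq_min fun t ht => ?_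
  simp only [length_drop_pref] at ht
  rw [getElem?_drop_pref, getElem?_drop_pref, if_pos (by omega), if_pos (by omega),
    apply_eq_of_modEq_of_eventually_periodic hN (by omega) (by omega) (hij.add_right t)]

theorem commonPrefixLength_drop_pref_le_of_not_modEq (hk : 0 < k)
    (hN : ∀ n, N ≤ n → x (n + k) = x n)
    (hmin : ∀ p, 1 ≤ p → (∃ M, ∀ n, M ≤ n → x (n + p) = x n) → k ≤ p) {i j : ℕ}
    (hi : N ≤ i) (hj : N ≤ j) (hij : ¬ i ≡ j [MOD k]) :
    ((pref x n).drop i).commonPrefixLength ((pref x n).drop j) ≤ k := by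
  obtain ⟨t, htk, hne⟩ := exists_lt_apply_add_ne_of_minimal_period hk hN hmin hi hj hij
  by_cases hin : i + t < n ∧ j + t < n
  · refine (List.commonPrefixLength_le_of_getElem?_ne ?_).trans htk.le
    rw [getElem?_drop_pref, getElem?_drop_pref, if_pos hin.1, if_pos hin.2]
    simpa using hne
  · have hl := List.commonPrefixLength_le_length_left ((pref x n).drop i) ((pref x n).drop j)
    have hr := List.commonPrefixLength_le_length_right ((pref x n).drop i) ((pref x n).drop j)
    rw [length_drop_pref] at hl hr
    omega

theorem abs_commonPrefixLength_drop_pref_sub_le (hk : 0 < k)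
    (hN : ∀ n, N ≤ n → x (n + k) = x n)
    (hmin : ∀ p, 1 ≤ p → (∃ M, ∀ n, M ≤ n → x (n + p) = x n) → k ≤ p) (i j : ℕ) :
    |(((pref x n).drop i).commonPrefixLength ((pref x n).drop j) : ℝ)
      - ((if i ≡ j [MOD k] then min (n - i) (n - j) else 0 : ℕ) : ℝ)|
      ≤ k + ((if i < N then (n : ℝ) else 0) + (if j < N then (n : ℝ) else 0)) := by
  have hl := List.commonPrefixLength_le_length_left ((pref x n).drop i) ((pref x n).drop j)
  have hr := List.commonPrefixLength_le_length_right ((pref x n).drop i) ((pref x n).drop j)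
  rw [length_drop_pref] at hl hr
  refine (abs_natCast_sub_le
    (e := k + ((if i < N then n else 0) + (if j < N then n else 0))) ?_ ?_).trans
    (by push_cast; rfl)
  all_goals
    by_cases hij : i ≡ j [MOD k]
    · have := fun hi hj => commonPrefixLength_drop_pref_of_modEq (n := n) hN hi hj hij
      simp only [if_pos hij]
      split_ifs <;> omega
    · have := fun hi hj =>
        commonPrefixLength_drop_pref_le_of_not_modEq (n := n) hk hN hmin hi hj hij
      simp only [if_neg hij]
      split_ifs <;> omega

end Prefix

/-- The main term of `kxSum_eq_sum_commonPrefixLength` on a length `n` prefix of a sequence with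
minimal period `k`: only pairs of positions in the same residue class mod `k` are counted. -/
def periodicLcpSum (k n : ℕ) : ℕ :=
  ∑ i ∈ range n, ∑ j ∈ range n, if i ≡ j [MOD k] then min (n - i) (n - j) else 0

theorem sum_range_ite_lt_le (n N : ℕ) {c : ℝ} (hc : 0 ≤ c) :
    ∑ i ∈ range n, (if i < N then c else 0) ≤ N * c := by
  rw [← sum_filter, sum_const, nsmul_eq_mul]
  gcongr
  exact_mod_cast (card_le_card fun i hi => by simp only [mem_filter, mem_range] at hi ⊢; omega).trans (card_range N).le

theorem abs_kxSum_pref_sub_periodicLcpSum_le {x : ℕ → Bool} {k N : ℕ} (hk : 0 < k)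
    (hN : ∀ n, N ≤ n → x (n + k) = x n)
    (hmin : ∀ p, 1 ≤ p → (∃ M, ∀ n, M ≤ n → x (n + p) = x n) → k ≤ p) (n : ℕ) :
    |(kxSum (pref x n) : ℝ) - periodicLcpSum k n| ≤ (k + 2 * N) * n ^ 2 := by
  rw [kxSum_eq_sum_commonPrefixLength, pref, List.length_map, List.length_range, periodicLcpSum]
  simp only [Nat.cast_sum, ← sum_sub_distrib]
  calc _ ≤ ∑ i ∈ range n, ∑ j ∈ range n,
        (k + ((if i < N then (n : ℝ) else 0) + (if j < N then (n : ℝ) else 0))) :=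
        (abs_sum_le_sum_abs _ _).trans <| sum_le_sum fun i _ =>
          (abs_sum_le_sum_abs _ _).trans <| sum_le_sum fun j _ =>
            abs_commonPrefixLength_drop_pref_sub_le hk hN hmin i j
    _ = n ^ 2 * k + 2 * n * ∑ i ∈ range n, (if i < N then (n : ℝ) else 0) := by
        simp only [sum_add_distrib, sum_const, card_range, nsmul_eq_mul, ← mul_sum]
        ring
    _ ≤ n ^ 2 * k + 2 * n * (N * n) := by
        gcongr
        exact sum_range_ite_lt_le n N n.cast_nonneg
    _ = (k + 2 * N) * n ^ 2 := by ring

theorem periodicLcpSum_eq_sum_count (k n : ℕ) :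
    periodicLcpSum k n =
      ∑ u ∈ range n, ∑ i ∈ range (u + 1), Nat.count (· ≡ i [MOD k]) (u + 1) := by
  have hmin_eq_sum (i j : ℕ) :
      min (n - i) (n - j) = ∑ u ∈ range n, if i ≤ u ∧ j ≤ u then 1 else 0 := by
    rw [sum_boole, Nat.cast_id,
      show {u ∈ range n | i ≤ u ∧ j ≤ u} = Ico (max i j) n by ext; simp only [mem_filter, mem_range, mem_Ico]; omega, Nat.card_Ico]
    omega
  have hinit {u : ℕ} (hu : u ∈ range n) : range (u + 1) = {i ∈ range n | i ≤ u} := by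
    ext
    simp only [mem_range, mem_filter] at hu ⊢
    omega
  calc periodicLcpSum k n
      = ∑ i ∈ range n, ∑ j ∈ range n, ∑ u ∈ range n,
          if i ≤ u then (if j ≤ u then (if j ≡ i [MOD k] then 1 else 0) else 0) else 0 := by
        refine sum_congr rfl fun i _ => sum_congr rfl fun j _ => ?_
        rw [hmin_eq_sum]
        by_cases hij : i ≡ j [MOD k] <;> simp [hij, ite_and, Nat.ModEq.comm]
    _ = ∑ u ∈ range n, ∑ i ∈ range n, ∑ j ∈ range n,
          if i ≤ u then (if j ≤ u then (if j ≡ i [MOD k] then 1 else 0) else 0) else 0 :=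
        (sum_congr rfl fun i _ => sum_comm).trans sum_comm
    _ = _ := by
        refine sum_congr rfl fun u hu => ?_
        simp_rw [Nat.count_eq_card_filter_range, card_filter, hinit hu, sum_filter]
        simp

theorem abs_mul_count_modEq_sub_le {k : ℕ} (hk : 0 < k) (L v : ℕ) :
    |((k * Nat.count (· ≡ v [MOD k]) L : ℕ) : ℝ) - L| ≤ k := by
  have hcount := Nat.count_modEq_card L hk v
  have hdiv := Nat.div_add_mod L k
  have hmod := Nat.mod_lt L hk
  generalize L / k = q at hcount hdiv
  refine abs_natCast_sub_le ?_ ?_ <;> rw [hcount] <;> split_ifs <;>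
    simp only [Nat.mul_add, mul_one, mul_zero] <;> omega

theorem abs_mul_sum_count_modEq_sub_sq_le {k : ℕ} (hk : 0 < k) (L : ℕ) :
    |(k * ∑ i ∈ range L, Nat.count (· ≡ i [MOD k]) L : ℝ) - L ^ 2| ≤ k * L := by
  calc |(k * ∑ i ∈ range L, Nat.count (· ≡ i [MOD k]) L : ℝ) - L ^ 2|
      = |∑ i ∈ range L, (((k * Nat.count (· ≡ i [MOD k]) L : ℕ) : ℝ) - L)| := by
        push_cast
        rw [sum_sub_distrib, mul_sum, sum_const, card_range, nsmul_eq_mul, sq]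
    _ ≤ ∑ _i ∈ range L, (k : ℝ) :=
        (abs_sum_le_sum_abs _ _).trans (sum_le_sum fun i _ => abs_mul_count_modEq_sub_le hk L i)
    _ = k * L := by rw [sum_const, card_range, nsmul_eq_mul, mul_comm]

theorem sum_range_add_one_sq (n : ℕ) :
    ∑ u ∈ range n, ((u : ℝ) + 1) ^ 2 = (n : ℝ) ^ 3 / 3 + (n : ℝ) ^ 2 / 2 + n / 6 := by
  induction n with
  | zero => simp
  | succ n ih =>
    rw [sum_range_succ, ih]
    push_cast
    ring

theorem abs_periodicLcpSum_sub_le {k : ℕ} (hk : 0 < k) (n : ℕ) :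
    |(periodicLcpSum k n : ℝ) - 1 / (3 * k) * n ^ 3| ≤ 2 * (n : ℝ) ^ 2 := by
  have hk' : (1 : ℝ) ≤ k := by exact_mod_cast hk
  have hn : (n : ℝ) ≤ n ^ 2 := by exact_mod_cast Nat.le_self_pow two_ne_zero n
  have hsum : |(k * periodicLcpSum k n : ℝ) - ∑ u ∈ range n, ((u : ℝ) + 1) ^ 2| ≤ k * n ^ 2 := by
    rw [periodicLcpSum_eq_sum_count]
    push_cast
    rw [mul_sum, ← sum_sub_distrib]
    calc _ ≤ ∑ u ∈ range n, (k * (u + 1) : ℝ) := (abs_sum_le_sum_abs _ _).trans <|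
          sum_le_sum fun u _ => by exact_mod_cast abs_mul_sum_count_modEq_sub_sq_le hk (u + 1)
      _ ≤ ∑ _u ∈ range n, (k * n : ℝ) := sum_le_sum fun u hu => by
          gcongr
          exact_mod_cast mem_range.mp hu
      _ = k * n ^ 2 := by rw [sum_const, card_range, nsmul_eq_mul]; ring
  rw [sum_range_add_one_sq, abs_le] at hsum
  rw [show (periodicLcpSum k n : ℝ) - 1 / (3 * k) * n ^ 3
      = (k * periodicLcpSum k n - n ^ 3 / 3) / k by field_simp,
    abs_div, Nat.abs_cast, div_le_iff₀ (by linarith), abs_le]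
  constructor <;> nlinarith [mul_le_mul_of_nonneg_right hk' (sq_nonneg (n : ℝ))]

/-- if `x` is eventually periodic with minimal period `k`, then
`lim_{n→∞} Σ(x_1...x_n)/n³ = 1/(3k)`. -/
theorem kxSum_tendsto_of_eventually_periodic (x : ℕ → Bool) (k : ℕ) (hk : 1 ≤ k)
    (hper : ∃ N, ∀ n, N ≤ n → x (n + k) = x n)
    (hmin : ∀ p, 1 ≤ p → (∃ N, ∀ n, N ≤ n → x (n + p) = x n) → k ≤ p) :
    Filter.Tendsto (fun n => (kxSum (pref x n) : ℝ) / (n : ℝ) ^ 3)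
      atTop (nhds (1 / (3 * (k : ℝ)))) := by
  obtain ⟨N, hN⟩ := hper
  refine tendsto_div_pow_of_abs_sub_le (d := 2) (C := k + 2 * N + 2) fun n => ?_
  calc |(kxSum (pref x n) : ℝ) - 1 / (3 * k) * n ^ 3|
      ≤ |(kxSum (pref x n) : ℝ) - periodicLcpSum k n|
        + |(periodicLcpSum k n : ℝ) - 1 / (3 * k) * n ^ 3| := abs_sub_le _ _ _
    _ ≤ (k + 2 * N) * n ^ 2 + 2 * n ^ 2 :=
        add_le_add (abs_kxSum_pref_sub_periodicLcpSum_le hk hN hmin n)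
          (abs_periodicLcpSum_sub_le hk n)
    _ = (k + 2 * N + 2) * n ^ 2 := by ring
end

section
/- Let ω be a binary word of length n ending in a letter different from the last letter of η, where η is a prime binary word of length k, and assume η^ℓ occurs exactly once in ωη^ℓ. Then for every ℓ ≥ 2, 0 ≤ Σ(ωη^{ℓ+2}) − 2Σ(ωη^{ℓ+1}) + Σ(ωη^ℓ) − 2k²ℓ < 2k⁴ + 3k. -/
open Filter

/-!
Counting, for every factor, the pairs of its occurrences gives
`Σ(u) = ∑_{i,j} lcp(u[i..], u[j..])`. Passing from `ωη^L` to `ωη^{L+1}` inserts a copy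
of `η` at position `n = |ω|`. Outside the inserted block the lcp of two suffixes is unchanged,
except on the diagonal inside `ω`, where it grows by `k = |η|`; for two distinct positions
inside `ω` this is where the uniqueness of the occurrence of `η^ℓ` in `ωη^ℓ` enters.
Writing `D_L` for the lcp-sum over the block `[n, n + k)` of `ωη^L` and `R_L` for the sum of
its rows, symmetry gives `Σ(ωη^{L+1}) + D_{L+1} = Σ(ωη^L) + nk + 2 R_{L+1}`. For the rows of
the block the same comparison holds one step later, now using the hypothesis on the last
letters and primitivity of `η`: `R_{L+2} = R_{L+1} + D_{L+2}`. Hence the second difference is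
exactly `D_{ℓ+1} + D_{ℓ+2}`. In the block the diagonal entries are the suffix lengths
`kL - r`, and the off-diagonal ones are `< k` because the rotations of a primitive word are
pairwise distinct; this gives both bounds.
-/

namespace List

variable {α : Type*} [DecidableEq α]

def lcp : List α → List α → ℕ
  | a :: x, b :: y => if a = b then lcp x y + 1 else 0
  | _, _ => 0

@[simp] theorem nil_lcp (y : List α) : lcp [] y = 0 := by cases y <;> rfl

@[simp] theorem lcp_nil (x : List α) : lcp x [] = 0 := by cases x <;> rfl

theorem le_lcp_iff {x y : List α} {t : ℕ} :
    t ≤ lcp x y ↔ t ≤ x.length ∧ t ≤ y.length ∧ x.take t = y.take t := by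
  induction x generalizing y t with
  | nil => simp +contextual
  | cons a x ih =>
    cases y with
    | nil => simp +contextual
    | cons b y =>
      cases t with
      | zero => simp
      | succ t => by_cases hab : a = b <;> simp [lcp, hab, ih]

theorem lcp_le_length_left (x y : List α) : lcp x y ≤ x.length :=
  (le_lcp_iff.1 le_rfl).1

theorem lcp_comm (x y : List α) : lcp x y = lcp y x :=
  eq_of_forall_le_iff fun _ => by
    rw [le_lcp_iff, le_lcp_iff]
    exact ⟨fun ⟨hx, hy, h⟩ => ⟨hy, hx, h.symm⟩,
      fun ⟨hy, hx, h⟩ => ⟨hx, hy, h.symm⟩⟩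

theorem length_le_lcp_of_prefix {ξ x y : List α} (hx : ξ <+: x) (hy : ξ <+: y) :
    ξ.length ≤ lcp x y :=
  le_lcp_iff.2 ⟨hx.length_le, hy.length_le,
    (prefix_iff_eq_take.1 hx).symm.trans (prefix_iff_eq_take.1 hy)⟩

theorem lcp_eq_length_left_of_prefix {x y : List α} (h : x <+: y) : lcp x y = x.length :=
  le_antisymm (lcp_le_length_left x y) (length_le_lcp_of_prefix (prefix_refl x) h)

@[simp] theorem lcp_self (x : List α) : lcp x x = x.length :=
  lcp_eq_length_left_of_prefix (prefix_refl x)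

theorem lcp_lt_length_left_iff {x y : List α} : lcp x y < x.length ↔ ¬ x <+: y := by
  refine ⟨fun h hxy => (lcp_eq_length_left_of_prefix hxy ▸ h).false, fun h => ?_⟩
  by_contra! hle
  obtain ⟨-, -, htake⟩ := le_lcp_iff.1 hle
  exact h (prefix_iff_eq_take.2 (by rwa [take_length] at htake))

theorem lcp_append_left {x y : List α} (u : List α) (h : ¬ x <+: y) :
    lcp (x ++ u) y = lcp x y := by
  induction x generalizing y with
  | nil => exact absurd nil_prefix h
  | cons a x ih =>
    cases y with
    | nil => rfl
    | cons b y =>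
      by_cases hab : a = b
      · subst hab
        simp only [cons_append, lcp, if_true]
        rw [ih (by simpa using h)]
      · simp [lcp, hab]

theorem lcp_append_append {x y : List α} (u v : List α) (hx : ¬ x <+: y) (hy : ¬ y <+: x) :
    lcp (x ++ u) (y ++ v) = lcp x y := by
  induction x generalizing y with
  | nil => exact absurd nil_prefix hx
  | cons a x ih =>
    cases y with
    | nil => exact absurd nil_prefix hy
    | cons b y =>
      by_cases hab : a = b
      · subst hab
        simp only [cons_append, lcp, if_true]
        rw [ih (by simpa using hx) (by simpa using hy)]
      · simp [lcp, hab]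

theorem lcp_append_left_of_length_le {x y : List α} (u : List α)
    (h : y.length ≤ x.length) : lcp (x ++ u) y = lcp x y := by
  by_cases hxy : x <+: y
  · obtain rfl := hxy.eq_of_length (le_antisymm hxy.length_le h)
    rw [lcp_self, lcp_comm, lcp_eq_length_left_of_prefix (prefix_append x u)]
  · exact lcp_append_left u hxy

def suffixLcp (u : List α) (i j : ℕ) : ℕ := lcp (u.drop i) (u.drop j)

theorem suffixLcp_comm (u : List α) (i j : ℕ) : suffixLcp u i j = suffixLcp u j i :=
  lcp_comm _ _

@[simp] theorem suffixLcp_self (u : List α) (i : ℕ) : suffixLcp u i i = u.length - i := by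
  simp [suffixLcp]

def suffixLcpSum (u : List α) (s t : Finset ℕ) : ℕ := ∑ i ∈ s, ∑ j ∈ t, u.suffixLcp i j

end List

theorem occ_eq_card_s16 (u ξ : List Bool) :
    occ u ξ = ((Finset.range u.length).filter (fun i => ξ <+: u.drop i)).card := by
  simp only [occ, ← List.isPrefixOf_iff_prefix]
  rw [← List.toFinset_range, ← List.toFinset_filter,
    List.toFinset_card_of_nodup (List.nodup_range.filter _)]

theorem occ_sq (u ξ : List Bool) :
    occ u ξ ^ 2 = ∑ i ∈ Finset.range u.length, ∑ j ∈ Finset.range u.length,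
      if ξ <+: u.drop i ∧ ξ <+: u.drop j then 1 else 0 := by
  simp only [occ_eq_card_s16, Finset.card_filter, sq, Finset.sum_mul_sum, ite_zero_mul_ite_zero,
    mul_one]

theorem card_nonempty_common_prefixes {u x : List Bool} (hx : x <:+ u) (y : List Bool) :
    ((u.sublists.toFinset.filter (fun ξ => ξ ≠ [])).filter
      (fun ξ => ξ <+: x ∧ ξ <+: y)).card = x.lcp y := by
  rw [show x.lcp y = (Finset.Icc 1 (x.lcp y)).card by simp]
  refine Finset.card_nbij' List.length (x.take ·) ?_ ?_ ?_ ?_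
  · intro ξ hξ
    simp only [Finset.mem_coe, Finset.mem_filter, List.mem_toFinset, List.mem_sublists] at hξ
    obtain ⟨⟨-, hne⟩, hξx, hξy⟩ := hξ
    simpa [Nat.one_le_iff_ne_zero, hne] using List.length_le_lcp_of_prefix hξx hξy
  · intro t ht
    simp only [Finset.coe_Icc, Set.mem_Icc] at ht
    obtain ⟨htx, -, htake⟩ := List.le_lcp_iff.1 ht.2
    simp only [Finset.mem_coe, Finset.mem_filter, List.mem_toFinset, List.mem_sublists]
    refine ⟨⟨((List.take_prefix t x).isInfix.trans hx.isInfix).sublist, ?_⟩,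
      List.take_prefix t x, htake ▸ List.take_prefix t y⟩
    rw [← List.length_pos_iff, List.length_take]
    omega
  · intro ξ hξ
    simp only [Finset.mem_coe, Finset.mem_filter] at hξ
    exact (List.prefix_iff_eq_take.1 hξ.2.1).symm
  · intro t ht
    simp only [Finset.coe_Icc, Set.mem_Icc] at ht
    simpa using (List.le_lcp_iff.1 ht.2).1

theorem kxSum_eq_suffixLcpSum (u : List Bool) :
    kxSum u = u.suffixLcpSum (Finset.range u.length) (Finset.range u.length) := by
  simp only [kxSum, occ_sq, List.suffixLcpSum]
  rw [Finset.sum_comm]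
  refine Finset.sum_congr rfl fun i _ => ?_
  rw [Finset.sum_comm]
  refine Finset.sum_congr rfl fun j _ => ?_
  rw [Finset.sum_boole, card_nonempty_common_prefixes (List.drop_suffix i u), Nat.cast_id,
    List.suffixLcp]

section Powers

variable {η : List Bool}

theorem wpow_succ (η : List Bool) (m : ℕ) : wpow η (m + 1) = η ++ wpow η m := by
  simp [wpow, List.replicate_succ]

theorem wpow_succ' (η : List Bool) (m : ℕ) : wpow η (m + 1) = wpow η m ++ η := by
  simp [wpow, List.replicate_succ']

@[simp] theorem wpow_one (η : List Bool) : wpow η 1 = η := by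
  simp [wpow]

theorem wpow_add (η : List Bool) (a b : ℕ) : wpow η (a + b) = wpow η a ++ wpow η b := by
  simp only [wpow, List.replicate_add, List.flatten_append]

@[simp] theorem length_wpow (η : List Bool) (m : ℕ) : (wpow η m).length = m * η.length := by
  simp [wpow]

theorem wpow_prefix_wpow (η : List Bool) {a b : ℕ} (h : a ≤ b) : wpow η a <+: wpow η b := by
  obtain ⟨c, rfl⟩ := Nat.exists_eq_add_of_le h
  rw [wpow_add]
  exact List.prefix_append _ _

theorem take_drop_wpow_eq_rotate {a L : ℕ} (ha : a ≤ η.length) (hL : 2 ≤ L) :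
    ((wpow η L).drop a).take η.length = η.rotate a := by
  obtain ⟨M, rfl⟩ := Nat.exists_eq_add_of_le' hL
  rw [wpow_succ, wpow_succ, List.drop_append_of_le_length ha, List.take_append,
    List.take_of_length_le (by simp), List.length_drop,
    show η.length - (η.length - a) = a by omega, List.take_append_of_le_length ha,
    List.rotate_eq_drop_append_take ha]

end Powers

section Primitive

variable {η : List Bool}

theorem isPeriodicPt_rotate_one_iff {α : Type*} {l : List α} {n : ℕ} :
    Function.IsPeriodicPt (fun l : List α => l.rotate 1) n l ↔ l.rotate n = l := by
  suffices h : ∀ l : List α, (fun l : List α => l.rotate 1)^[n] l = l.rotate n from by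
    rw [Function.IsPeriodicPt, Function.IsFixedPt, h]
  intro l
  induction n generalizing l with
  | zero => simp
  | succ n ih => rw [Function.iterate_succ_apply, ih, List.rotate_rotate, add_comm]

theorem take_mul_eq_wpow_of_rotate_eq_self {l : List Bool} {g : ℕ} (hrot : l.rotate g = l)
    (m : ℕ) (hm : m * g ≤ l.length) : l.take (m * g) = wpow (l.take g) m := by
  induction m with
  | zero => simp [wpow]
  | succ m ih =>
    rw [add_mul, one_mul] at hm ⊢
    have hdrop : l.drop g <+: l := by
      have h := List.prefix_append (l.drop g) (l.take g)
      rwa [← List.rotate_eq_drop_append_take (by omega), hrot] at h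
    have hmg : m * g ≤ (l.drop g).length := by rw [List.length_drop]; omega
    rw [add_comm, List.take_add, wpow_succ, ← ih (by omega),
      List.prefix_iff_eq_take.1 hdrop, List.take_take, min_eq_left hmg]

theorem IsPrimeWord.rotate_ne_self (hη : IsPrimeWord η) {d : ℕ} (hd0 : 0 < d)
    (hd : d < η.length) : η.rotate d ≠ η := by
  intro hrot
  set g := d.gcd η.length
  have hper : η.rotate g = η :=
    isPeriodicPt_rotate_one_iff.1 ((isPeriodicPt_rotate_one_iff.2 hrot).gcd
      (isPeriodicPt_rotate_one_iff.2 (List.rotate_length η)))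
  have hg0 : 0 < g := Nat.gcd_pos_of_pos_left _ hd0
  have hgd : g ≤ d := Nat.gcd_le_left _ hd0
  obtain ⟨m, hm⟩ : g ∣ η.length := Nat.gcd_dvd_right _ _
  have hm2 : 1 < m := Nat.lt_of_mul_lt_mul_left (a := g) (by rw [mul_one, ← hm]; omega)
  apply hη.2 (η.take g) m hm2
  rw [← take_mul_eq_wpow_of_rotate_eq_self hper m (by rw [hm, mul_comm]),
    mul_comm, ← hm, List.take_length]

theorem IsPrimeWord.eq_of_rotate_eq (hη : IsPrimeWord η) {a b : ℕ} (ha : a < η.length)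
    (hb : b < η.length) (h : η.rotate a = η.rotate b) : a = b := by
  wlog hab : a ≤ b generalizing a b
  · exact (this hb ha h.symm (by omega)).symm
  by_contra hne
  refine hη.rotate_ne_self (d := b - a) (by omega) (by omega) ?_
  rw [← List.rotate_eq_rotate (n := a), List.rotate_rotate, Nat.sub_add_cancel hab, h]

theorem IsPrimeWord.lcp_drop_wpow_lt (hη : IsPrimeWord η) {a b L M : ℕ} (ha : a < η.length)
    (hb : b < η.length) (hab : a ≠ b) (hL : 2 ≤ L) (hM : 2 ≤ M) :
    ((wpow η L).drop a).lcp ((wpow η M).drop b) < η.length := by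
  by_contra! h
  obtain ⟨-, -, htake⟩ := List.le_lcp_iff.1 h
  rw [take_drop_wpow_eq_rotate ha.le hL, take_drop_wpow_eq_rotate hb.le hM] at htake
  exact hab (hη.eq_of_rotate_eq ha hb htake)

theorem IsPrimeWord.not_prefix_drop_wpow (hη : IsPrimeWord η) {q L : ℕ} (hq0 : 0 < q)
    (hq : q < η.length) (hL : 2 ≤ L) : ¬ η <+: (wpow η L).drop q := by
  intro h
  have hpre : η <+: (wpow η L).drop 0 := by
    obtain ⟨M, rfl⟩ := Nat.exists_eq_add_of_le' hL
    rw [List.drop_zero, wpow_succ]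
    exact List.prefix_append _ _
  exact (hη.lcp_drop_wpow_lt (by omega) hq hq0.ne hL hL).not_ge
    (List.length_le_lcp_of_prefix hpre h)

end Primitive

theorem lt_length_of_prefix_drop {u ξ : List Bool} (hξ : ξ ≠ []) {p : ℕ}
    (h : ξ <+: u.drop p) : p < u.length := by
  by_contra! hp
  rw [List.drop_eq_nil_of_le hp, List.prefix_nil] at h
  exact hξ h

theorem eq_of_occ_eq_one {u ξ : List Bool} (hξ : ξ ≠ []) (h : occ u ξ = 1) {p q : ℕ}
    (hp : ξ <+: u.drop p) (hq : ξ <+: u.drop q) : p = q := by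
  rw [occ_eq_card_s16] at h
  exact Finset.card_le_one.1 h.le p
    (Finset.mem_filter.2 ⟨Finset.mem_range.2 (lt_length_of_prefix_drop hξ hp), hp⟩) q
    (Finset.mem_filter.2 ⟨Finset.mem_range.2 (lt_length_of_prefix_drop hξ hq), hq⟩)

section PowerSuffix

variable {ω η : List Bool} {ℓ L : ℕ}

theorem drop_append_wpow_succ_of_le {i : ℕ} (hi : i ≤ ω.length + L * η.length) :
    (ω ++ wpow η (L + 1)).drop i = (ω ++ wpow η L).drop i ++ η := by
  rw [wpow_succ', ← List.append_assoc, List.drop_append_of_le_length (by simpa using hi)]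

theorem drop_append_of_length_le {x : List Bool} {j : ℕ} (hj : ω.length ≤ j) :
    (ω ++ x).drop j = x.drop (j - ω.length) := by
  rw [List.drop_append, List.drop_eq_nil_of_le hj, List.nil_append]

theorem drop_append_wpow_succ_add {j : ℕ} (hj : ω.length ≤ j) :
    (ω ++ wpow η (L + 1)).drop (j + η.length) = (ω ++ wpow η L).drop j := by
  rw [drop_append_of_length_le (by omega), drop_append_of_length_le hj, wpow_succ,
    show j + η.length - ω.length = η.length + (j - ω.length) by omega,
    List.drop_length_add_append]

theorem not_wpow_prefix_drop_of_lt (hη : η ≠ []) (hℓ : ℓ ≠ 0)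
    (hocc : occ (ω ++ wpow η ℓ) (wpow η ℓ) = 1) (hL : ℓ ≤ L) {m : ℕ}
    (hm : m < ω.length) :
    ¬ wpow η ℓ <+: (ω ++ wpow η L).drop m := by
  intro h
  have hne : wpow η ℓ ≠ [] := by
    rw [← List.length_pos_iff, length_wpow]
    exact Nat.mul_pos (Nat.pos_of_ne_zero hℓ) (List.length_pos_iff.2 hη)
  have hsub : (ω ++ wpow η ℓ).drop m <+: (ω ++ wpow η L).drop m :=
    ((List.prefix_append_right_inj ω).2 (wpow_prefix_wpow η hL)).drop m
  have h' : wpow η ℓ <+: (ω ++ wpow η ℓ).drop m :=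
    List.prefix_of_prefix_length_le h hsub (by simp; omega)
  have hn : wpow η ℓ <+: (ω ++ wpow η ℓ).drop ω.length := by
    rw [List.drop_left]
  exact hm.ne (eq_of_occ_eq_one hne hocc h' hn)

theorem not_drop_prefix_drop_of_lt (hη : η ≠ []) (hℓ : ℓ ≠ 0)
    (hocc : occ (ω ++ wpow η ℓ) (wpow η ℓ) = 1) (hL : ℓ ≤ L) {p q : ℕ} (hpq : p < q)
    (hq : q < ω.length) : ¬ (ω ++ wpow η L).drop q <+: (ω ++ wpow η L).drop p := by
  intro h
  have h' := h.drop (ω.length - q)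
  rw [List.drop_drop, List.drop_drop, Nat.add_sub_cancel' hq.le, List.drop_left] at h'
  exact not_wpow_prefix_drop_of_lt hη hℓ hocc hL (m := p + (ω.length - q)) (by omega)
    ((wpow_prefix_wpow η hL).trans h')

theorem not_drop_wpow_prefix_drop (hη : IsPrimeWord η) (hℓ : ℓ ≠ 0)
    (hocc : occ (ω ++ wpow η ℓ) (wpow η ℓ) = 1) (hlast : ω.getLast? ≠ η.getLast?)
    (hL : ℓ + 1 ≤ L) {a i : ℕ} (ha : a < η.length) (hi : i < ω.length) :
    ¬ (wpow η L).drop a <+: (ω ++ wpow η L).drop i := by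
  intro h
  obtain ⟨L, rfl⟩ := Nat.exists_eq_add_of_le' (le_trans (by omega) hL : 1 ≤ L)
  rcases Nat.eq_zero_or_pos a with rfl | ha0
  · exact not_wpow_prefix_drop_of_lt hη.1 hℓ hocc (by omega) hi
      ((wpow_prefix_wpow η (by omega)).trans (List.drop_zero ▸ h))
  have hrow : (wpow η (L + 1)).drop a = η.drop a ++ wpow η L := by
    rw [wpow_succ, List.drop_append_of_le_length ha.le]
  have htail := h.drop (η.length - a)
  rw [hrow, List.drop_left' (by simp), List.drop_drop] at htail
  rcases lt_trichotomy (i + (η.length - a)) ω.length with hp | hp | hp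
  · exact not_wpow_prefix_drop_of_lt hη.1 hℓ hocc (by omega) hp
      ((wpow_prefix_wpow η (by omega)).trans htail)
  · -- the last `|η| - a` letters of `ω` and of `η` agree
    have hhead : η.drop a <+: ω.drop i := by
      refine List.prefix_of_prefix_length_le ((List.prefix_append _ _).trans (hrow ▸ h)) ?_
        (by simp; omega)
      rw [List.drop_append_of_le_length hi.le]
      exact List.prefix_append _ _
    have heq := hhead.eq_of_length (by simp; omega)
    have := congrArg List.getLast? heq
    rw [List.getLast?_drop, List.getLast?_drop, if_neg (by omega), if_neg (by omega)] at this
    exact hlast this.symm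
  · rw [drop_append_of_length_le hp.le] at htail
    have hη1 : η <+: wpow η L := by simpa using wpow_prefix_wpow η (show 1 ≤ L by omega)
    exact hη.not_prefix_drop_wpow (by omega) (by omega) (by omega) (hη1.trans htail)

end PowerSuffix

/-- Position `i` of `ωη^L` corresponds to position `gapShift |ω| |η| i` of `ωη^{L+1}`. -/
def gapShift (n k i : ℕ) : ℕ := if i < n then i else i + k

section Transfer

variable {ω η : List Bool} {ℓ L : ℕ}

theorem lcp_drop_append_drop_append_of_lt (hη : η ≠ []) (hℓ : ℓ ≠ 0)
    (hocc : occ (ω ++ wpow η ℓ) (wpow η ℓ) = 1) (hL : ℓ ≤ L) {p q : ℕ} (hpq : p < q)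
    (hq : q < ω.length) (u : List Bool) :
    ((ω ++ wpow η L).drop p ++ u).lcp ((ω ++ wpow η L).drop q ++ u) =
      ((ω ++ wpow η L).drop p).lcp ((ω ++ wpow η L).drop q) := by
  refine List.lcp_append_append u u (fun h => ?_)
    (not_drop_prefix_drop_of_lt hη hℓ hocc hL hpq hq)
  have := h.length_le
  simp only [List.length_drop, List.length_append, length_wpow] at this
  omega

theorem suffixLcp_gapShift (hη : η ≠ []) (hℓ : ℓ ≠ 0)
    (hocc : occ (ω ++ wpow η ℓ) (wpow η ℓ) = 1) (hL : ℓ ≤ L) (i j : ℕ) :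
    (ω ++ wpow η (L + 1)).suffixLcp (gapShift ω.length η.length i)
        (gapShift ω.length η.length j) =
      (ω ++ wpow η L).suffixLcp i j + if i = j ∧ i < ω.length then η.length else 0 := by
  simp only [gapShift, List.suffixLcp]
  by_cases hi : i < ω.length <;> by_cases hj : j < ω.length
  · rw [if_pos hi, if_pos hj, drop_append_wpow_succ_of_le (by omega),
      drop_append_wpow_succ_of_le (by omega)]
    rcases lt_trichotomy i j with h | rfl | h
    · rw [if_neg (by omega), add_zero,
        lcp_drop_append_drop_append_of_lt hη hℓ hocc hL h hj]
    · simp; omega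
    · rw [if_neg (by omega), add_zero, List.lcp_comm, List.lcp_comm (List.drop i _),
        lcp_drop_append_drop_append_of_lt hη hℓ hocc hL h hi]
  · rw [if_pos hi, if_neg hj, if_neg (by omega), add_zero,
      drop_append_wpow_succ_of_le (i := i) (by omega),
      drop_append_wpow_succ_add (j := j) (by omega)]
    exact List.lcp_append_left_of_length_le _ (by simp; omega)
  · rw [if_neg hi, if_pos hj, if_neg (by omega), add_zero,
      drop_append_wpow_succ_of_le (i := j) (by omega),
      drop_append_wpow_succ_add (j := i) (by omega),
      List.lcp_comm, List.lcp_comm (List.drop i _)]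
    exact List.lcp_append_left_of_length_le _ (by simp; omega)
  · rw [if_neg hi, if_neg hj, if_neg (by omega), add_zero, drop_append_wpow_succ_add (by omega),
      drop_append_wpow_succ_add (by omega)]

theorem suffixLcp_gapShift_right (hη : IsPrimeWord η) (hℓ : ℓ ≠ 0)
    (hocc : occ (ω ++ wpow η ℓ) (wpow η ℓ) = 1) (hlast : ω.getLast? ≠ η.getLast?)
    (hL : ℓ + 1 ≤ L) {i : ℕ} (hi : ω.length ≤ i) (hi' : i < ω.length + η.length)
    (j : ℕ) :
    (ω ++ wpow η (L + 1)).suffixLcp i (gapShift ω.length η.length j) =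
      (ω ++ wpow η L).suffixLcp i j := by
  have hLk : 2 * η.length ≤ L * η.length := Nat.mul_le_mul_right _ (by omega)
  have hx : (ω ++ wpow η L).drop i = (wpow η L).drop (i - ω.length) :=
    drop_append_of_length_le hi
  simp only [gapShift, List.suffixLcp]
  rw [drop_append_wpow_succ_of_le (by omega)]
  by_cases hj : j < ω.length
  · rw [if_pos hj, drop_append_wpow_succ_of_le (by omega)]
    refine List.lcp_append_append η η ?_ fun h => ?_
    · rw [hx]
      exact not_drop_wpow_prefix_drop hη hℓ hocc hlast hL (by omega) hj
    · have := h.length_le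
      simp only [List.length_drop, List.length_append, length_wpow] at this
      omega
  rw [if_neg hj, drop_append_wpow_succ_add (by omega)]
  by_cases hij : i ≤ j
  · exact List.lcp_append_left_of_length_le _ (by simp; omega)
  apply List.lcp_append_left
  rw [← List.lcp_lt_length_left_iff, hx, drop_append_of_length_le (by omega)]
  have := hη.lcp_drop_wpow_lt (a := i - ω.length) (b := j - ω.length) (L := L) (M := L)
    (by omega) (by omega) (by omega) (by omega) (by omega)
  simp only [List.length_drop, length_wpow]
  omega

end Transfer

section GapSums

open Finset

variable {M : Type*} [AddCommMonoid M] {n N : ℕ}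

theorem sum_range_add_eq_sum_gapShift (g : ℕ → M) (k : ℕ) (h : n ≤ N) :
    ∑ j ∈ range (N + k), g j =
      ∑ j ∈ range N, g (gapShift n k j) + ∑ j ∈ Ico n (n + k), g j := by
  have hshift : ∑ j ∈ range N, g (gapShift n k j) =
      ∑ j ∈ range n, g j + ∑ j ∈ Ico (n + k) (N + k), g j := by
    rw [← sum_range_add_sum_Ico _ h, ← sum_Ico_add']
    congr 1
    · exact sum_congr rfl fun j hj => by rw [gapShift, if_pos (mem_range.1 hj)]
    · exact sum_congr rfl fun j hj => by rw [gapShift, if_neg (by simp at hj; omega)]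
  rw [hshift, add_assoc, add_comm (∑ j ∈ Ico (n + k) (N + k), g j),
    sum_Ico_consecutive _ (by omega) (by omega), sum_range_add_sum_Ico _ (by omega)]

theorem sum_sum_range_add_eq_sum_sum_gapShift (G : ℕ → ℕ → M) (hG : ∀ i j, G i j = G j i)
    (k : ℕ) (h : n ≤ N) :
    ∑ i ∈ range (N + k), ∑ j ∈ range (N + k), G i j +
        ∑ i ∈ Ico n (n + k), ∑ j ∈ Ico n (n + k), G i j =
      ∑ i ∈ range N, ∑ j ∈ range N, G (gapShift n k i) (gapShift n k j) +
        2 • ∑ i ∈ Ico n (n + k), ∑ j ∈ range (N + k), G i j := by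
  have hrow (i : ℕ) := sum_range_add_eq_sum_gapShift (G i) k h
  have hcross : ∑ i ∈ range N, ∑ j ∈ Ico n (n + k), G (gapShift n k i) j +
      ∑ i ∈ Ico n (n + k), ∑ j ∈ Ico n (n + k), G i j =
      ∑ i ∈ Ico n (n + k), ∑ j ∈ range (N + k), G i j := by
    simp only [hrow, sum_add_distrib]
    rw [sum_comm]
    simp only [hG _ (gapShift n k _)]
  rw [sum_range_add_eq_sum_gapShift (fun i => ∑ j ∈ range (N + k), G i j) k h]
  simp only [hrow (gapShift n k _), sum_add_distrib]
  rw [two_nsmul, ← hcross]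
  abel

end GapSums

theorem Finset.sum_sum_le_of_diag_le_of_offDiag_le {ι : Type*} [DecidableEq ι] {s : Finset ι}
    {f : ι → ι → ℕ} {a b : ℕ} (hdiag : ∀ i ∈ s, f i i ≤ a)
    (hoff : ∀ i ∈ s, ∀ j ∈ s, i ≠ j → f i j ≤ b) :
    ∑ i ∈ s, ∑ j ∈ s, f i j ≤ s.card * (a + (s.card - 1) * b) := by
  rw [← smul_eq_mul]
  refine Finset.sum_le_card_nsmul _ _ _ fun i hi => ?_
  rw [← Finset.add_sum_erase _ _ hi]
  have hrest := Finset.sum_le_card_nsmul (s.erase i) (f i) b fun j hj =>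
    hoff i hi j (Finset.mem_of_mem_erase hj) (Finset.ne_of_mem_erase hj).symm
  rw [Finset.card_erase_of_mem hi, smul_eq_mul] at hrest
  exact add_le_add (hdiag i hi) hrest

section SecondDifference

open Finset

variable {ω η : List Bool} {ℓ L M : ℕ}

theorem length_append_wpow_succ :
    (ω ++ wpow η (L + 1)).length = (ω ++ wpow η L).length + η.length := by
  simp only [List.length_append, length_wpow]
  ring

theorem kxSum_succ_add_suffixLcpSum (hη : η ≠ []) (hℓ : ℓ ≠ 0)
    (hocc : occ (ω ++ wpow η ℓ) (wpow η ℓ) = 1) (hL : ℓ ≤ L) :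
    kxSum (ω ++ wpow η (L + 1)) + (ω ++ wpow η (L + 1)).suffixLcpSum
        (Ico ω.length (ω.length + η.length)) (Ico ω.length (ω.length + η.length)) =
      kxSum (ω ++ wpow η L) + ω.length * η.length +
        2 * (ω ++ wpow η (L + 1)).suffixLcpSum (Ico ω.length (ω.length + η.length))
          (range (ω ++ wpow η (L + 1)).length) := by
  have hdiag : ∑ i ∈ range (ω ++ wpow η L).length, ∑ j ∈ range (ω ++ wpow η L).length,
      (if i = j ∧ i < ω.length then η.length else 0) = ω.length * η.length := by
    simp only [ite_and, sum_ite_eq]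
    rw [sum_congr rfl fun i hi => if_pos hi,
      ← sum_range_add_sum_Ico (fun i => if i < ω.length then η.length else 0)
        (by simp : ω.length ≤ (ω ++ wpow η L).length),
      sum_congr rfl fun i hi => if_pos (mem_range.1 hi),
      sum_congr rfl fun i hi => if_neg (not_lt.2 (mem_Ico.1 hi).1)]
    simp
  simp only [kxSum_eq_suffixLcpSum, List.suffixLcpSum]
  rw [length_append_wpow_succ,
    sum_sum_range_add_eq_sum_sum_gapShift _ (List.suffixLcp_comm _) _ (by simp)]
  simp only [suffixLcp_gapShift hη hℓ hocc hL, sum_add_distrib, hdiag, smul_eq_mul]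

theorem suffixLcpSum_block_range_succ (hη : IsPrimeWord η) (hℓ : ℓ ≠ 0)
    (hocc : occ (ω ++ wpow η ℓ) (wpow η ℓ) = 1) (hlast : ω.getLast? ≠ η.getLast?)
    (hL : ℓ + 1 ≤ L) :
    (ω ++ wpow η (L + 1)).suffixLcpSum (Ico ω.length (ω.length + η.length))
        (range (ω ++ wpow η (L + 1)).length) =
      (ω ++ wpow η L).suffixLcpSum (Ico ω.length (ω.length + η.length))
          (range (ω ++ wpow η L).length) +
        (ω ++ wpow η (L + 1)).suffixLcpSum (Ico ω.length (ω.length + η.length))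
          (Ico ω.length (ω.length + η.length)) := by
  simp only [List.suffixLcpSum]
  rw [length_append_wpow_succ, ← sum_add_distrib]
  refine sum_congr rfl fun i hi => ?_
  rw [mem_Ico] at hi
  rw [sum_range_add_eq_sum_gapShift (n := ω.length) (N := (ω ++ wpow η L).length) _ _ (by simp)]
  simp only [suffixLcp_gapShift_right hη hℓ hocc hlast hL hi.1 hi.2]

theorem kxSum_add_kxSum_eq (hη : IsPrimeWord η) (hℓ : ℓ ≠ 0)
    (hocc : occ (ω ++ wpow η ℓ) (wpow η ℓ) = 1) (hlast : ω.getLast? ≠ η.getLast?) :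
    kxSum (ω ++ wpow η (ℓ + 2)) + kxSum (ω ++ wpow η ℓ) =
      2 * kxSum (ω ++ wpow η (ℓ + 1)) +
        (ω ++ wpow η (ℓ + 1)).suffixLcpSum (Ico ω.length (ω.length + η.length))
          (Ico ω.length (ω.length + η.length)) +
        (ω ++ wpow η (ℓ + 2)).suffixLcpSum (Ico ω.length (ω.length + η.length))
          (Ico ω.length (ω.length + η.length)) := by
  rw [show ℓ + 2 = ℓ + 1 + 1 from rfl]
  have h₁ := kxSum_succ_add_suffixLcpSum hη.1 hℓ hocc (L := ℓ) le_rfl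
  have h₂ := kxSum_succ_add_suffixLcpSum hη.1 hℓ hocc (L := ℓ + 1) (by omega)
  have h₃ := suffixLcpSum_block_range_succ hη hℓ hocc hlast (L := ℓ + 1) le_rfl
  omega

theorem le_suffixLcpSum_block (hM : M ≠ 0) :
    η.length * (η.length * (M - 1) + 1) ≤
      (ω ++ wpow η M).suffixLcpSum (Ico ω.length (ω.length + η.length))
        (Ico ω.length (ω.length + η.length)) := by
  obtain ⟨M, rfl⟩ := Nat.exists_eq_add_of_le' (Nat.one_le_iff_ne_zero.2 hM)
  calc η.length * (η.length * (M + 1 - 1) + 1)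
      = ∑ i ∈ Ico ω.length (ω.length + η.length), (M * η.length + 1) := by simp [mul_comm]
    _ ≤ ∑ i ∈ Ico ω.length (ω.length + η.length),
          (ω ++ wpow η (M + 1)).suffixLcp i i := by
        refine sum_le_sum fun i hi => ?_
        rw [mem_Ico] at hi
        simp only [List.suffixLcp_self, List.length_append, length_wpow, add_mul, one_mul]
        omega
    _ ≤ _ := sum_le_sum fun i hi => single_le_sum (fun _ _ => Nat.zero_le _) hi

theorem suffixLcpSum_block_le (hη : IsPrimeWord η) (hM : 2 ≤ M) :
    (ω ++ wpow η M).suffixLcpSum (Ico ω.length (ω.length + η.length))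
        (Ico ω.length (ω.length + η.length)) ≤
      η.length * (η.length * M + (η.length - 1) * (η.length - 1)) := by
  have hcard : (Ico ω.length (ω.length + η.length)).card = η.length := by simp
  calc _ ≤ #(Ico ω.length (ω.length + η.length)) * (η.length * M +
        (#(Ico ω.length (ω.length + η.length)) - 1) * (η.length - 1)) :=
        sum_sum_le_of_diag_le_of_offDiag_le (fun i hi => ?_) (fun i hi j hj hij => ?_)
    _ = _ := by rw [hcard]
  · rw [mem_Ico] at hi
    simp only [List.suffixLcp_self, List.length_append, length_wpow]
    rw [mul_comm]
    omega
  · rw [mem_Ico] at hi hj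
    rw [List.suffixLcp, drop_append_of_length_le hi.1, drop_append_of_length_le hj.1]
    have := hη.lcp_drop_wpow_lt (a := i - ω.length) (b := j - ω.length) (by omega) (by omega)
      (by omega) hM hM
    omega

end SecondDifference

theorem kxSum_second_difference_general (ω η : List Bool) (k : ℕ)
    (hη : IsPrimeWord η) (hk : η.length = k)
    (hlast : ω.getLast? ≠ η.getLast?) :
    ∀ ℓ, 2 ≤ ℓ → occ (ω ++ wpow η ℓ) (wpow η ℓ) = 1 →
      0 ≤ (kxSum (ω ++ wpow η (ℓ + 2)) : ℤ) - 2 * kxSum (ω ++ wpow η (ℓ + 1)) +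
            kxSum (ω ++ wpow η ℓ) - 2 * k ^ 2 * ℓ ∧
        (kxSum (ω ++ wpow η (ℓ + 2)) : ℤ) - 2 * kxSum (ω ++ wpow η (ℓ + 1)) +
            kxSum (ω ++ wpow η ℓ) - 2 * k ^ 2 * ℓ < 2 * k ^ 4 + 3 * k := by
  intro ℓ hℓ hocc
  have key := kxSum_add_kxSum_eq hη (by omega) hocc hlast
  have lo₁ := le_suffixLcpSum_block (ω := ω) (η := η) (M := ℓ + 1) (by omega)
  have lo₂ := le_suffixLcpSum_block (ω := ω) (η := η) (M := ℓ + 2) (by omega)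
  have hi₁ := suffixLcpSum_block_le (ω := ω) hη (M := ℓ + 1) (by omega)
  have hi₂ := suffixLcpSum_block_le (ω := ω) hη (M := ℓ + 2) (by omega)
  obtain ⟨m, rfl⟩ : ∃ m, k = m + 1 :=
    ⟨k - 1, by have := List.length_pos_iff.2 hη.1; omega⟩
  rw [show ℓ + 2 - 1 = ℓ + 1 by omega] at lo₂
  simp only [hk, Nat.add_sub_cancel] at key lo₁ lo₂ hi₁ hi₂
  zify at key lo₁ lo₂ hi₁ hi₂
  push_cast
  have hm : (0 : ℤ) ≤ m := m.cast_nonneg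
  constructor <;> nlinarith [mul_nonneg hm hm, mul_nonneg (mul_nonneg hm hm) hm]

/-- let `ω` end in a letter different from the last letter of the
prime word `η` of length `k`, and suppose `η^ℓ` occurs exactly once in `ωη^ℓ`.
Then for `ℓ ≥ 2`,
`0 ≤ Σ(ωη^{ℓ+2}) − 2Σ(ωη^{ℓ+1}) + Σ(ωη^ℓ) − 2k²ℓ < 2k⁴ + 3k`. -/
theorem kxSum_second_difference (ω η : List Bool) (k : ℕ)
    (hη : IsPrimeWord η) (hk : η.length = k)
    (hω : ω ≠ []) (hlast : ω.getLast? ≠ η.getLast?) :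
    ∀ ℓ, 2 ≤ ℓ → occ (ω ++ wpow η ℓ) (wpow η ℓ) = 1 →
      0 ≤ (kxSum (ω ++ wpow η (ℓ + 2)) : ℤ) - 2 * kxSum (ω ++ wpow η (ℓ + 1)) +
            kxSum (ω ++ wpow η ℓ) - 2 * k ^ 2 * ℓ ∧
        (kxSum (ω ++ wpow η (ℓ + 2)) : ℤ) - 2 * kxSum (ω ++ wpow η (ℓ + 1)) +
            kxSum (ω ++ wpow η ℓ) - 2 * k ^ 2 * ℓ < 2 * k ^ 4 + 3 * k :=
  kxSum_second_difference_general ω η k hη hk hlast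
end
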